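/- arXiv:2605.25843 — 4 statements merged into one kernel-verified Lean document; each statement's English description precedes it below -/
import Mathlib

section
/- Let d be a positive integer, δ ∈ (0, 1), and let x = (x_1, …, x_d) be a random vector in ℝ^d whose d coordinates are independent Gaussian random variables with mean 0 and variance 1/d. Then the probability that the Euclidean norm of x lies in the open interval (1 − δ, 1 + δ) is at least 1 − 2·exp(−δ²·d/10). -/
open MeasureTheory ProbabilityTheory
open scoped NNReal

/-! Chernoff bound for `S = ∑ xᵢ²`: for `xᵢ ∼ N(0, v)` one has `E[exp (t xᵢ²)] = (1 - 2tv)^(-1/2)`,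
so Markov's inequality for `exp (t S)` with `v = 1/d` and `t = dδ/8`, resp. `t = -dδ/4`, bounds
`P[S ≥ (1+δ)²]` and `P[S ≤ (1-δ)²]` by the `d`-th power of a per-coordinate factor, which is at
most `exp (-δ²/10)` by `1 + u ≤ exp u`. -/

open Real

section GaussianSquare

variable {v : ℝ≥0}

lemma gaussianPDFReal_zero_mul_exp_mul_sq (hv : v ≠ 0) (t x : ℝ) :
    gaussianPDFReal 0 v x * exp (t * x ^ 2) =
      (√(2 * π * v))⁻¹ * exp (-((1 - 2 * t * v) / (2 * v)) * x ^ 2) := by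
  have hv' : (v : ℝ) ≠ 0 := by exact_mod_cast hv
  rw [gaussianPDFReal, mul_assoc, ← exp_add]
  congr 2
  field_simp
  ring

/-- For `1 ≤ 2tv` both sides are junk zeros: the integral diverges and `√` of a nonpositive
number is `0`. -/
lemma integral_exp_mul_sq_gaussianReal (hv : v ≠ 0) (t : ℝ) :
    ∫ x, exp (t * x ^ 2) ∂gaussianReal 0 v = (√(1 - 2 * t * v))⁻¹ := by
  have hv' : (0 : ℝ) < v := by positivity
  simp only [integral_gaussianReal_eq_integral_smul hv, smul_eq_mul,
    gaussianPDFReal_zero_mul_exp_mul_sq hv, integral_const_mul, integral_gaussian]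
  rw [← sqrt_inv, ← sqrt_mul (by positivity), ← sqrt_inv]
  congr 1
  field_simp

lemma integrable_exp_mul_sq_gaussianReal {t : ℝ} (hv : v ≠ 0) (ht : 2 * t * v < 1) :
    Integrable (fun x => exp (t * x ^ 2)) (gaussianReal 0 v) := by
  refine Integrable.of_integral_ne_zero ?_
  rw [integral_exp_mul_sq_gaussianReal hv t]
  have : 0 < 1 - 2 * t * v := by linarith
  positivity

variable {ι : Type*} [Fintype ι]

lemma integrable_exp_mul_sum_sq_pi_gaussianReal {t : ℝ} (hv : v ≠ 0) (ht : 2 * t * v < 1) :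
    Integrable (fun x : ι → ℝ => exp (t * ∑ i, x i ^ 2))
      (Measure.pi fun _ => gaussianReal 0 v) := by
  simp only [Finset.mul_sum, exp_sum]
  exact Integrable.fintype_prod (f := fun _ x => exp (t * x ^ 2))
    fun _ => integrable_exp_mul_sq_gaussianReal hv ht

lemma mgf_sum_sq_pi_gaussianReal (hv : v ≠ 0) (t : ℝ) :
    mgf (fun x : ι → ℝ => ∑ i, x i ^ 2) (Measure.pi fun _ => gaussianReal 0 v) t =
      (√(1 - 2 * t * v))⁻¹ ^ Fintype.card ι := by
  simp only [mgf, Finset.mul_sum, exp_sum]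
  rw [integral_fintype_prod_eq_pow (fun x => exp (t * x ^ 2)),
    integral_exp_mul_sq_gaussianReal hv t]

end GaussianSquare

section Chernoff

variable {ι : Type*} [Fintype ι] {v : ℝ≥0} {t : ℝ}

lemma measureReal_pi_gaussianReal_le_sum_sq_le (hv : v ≠ 0) (ht₀ : 0 ≤ t)
    (ht : 2 * t * v < 1) (a : ℝ) :
    (Measure.pi fun _ => gaussianReal 0 v).real {x : ι → ℝ | a ≤ ∑ i, x i ^ 2} ≤
      exp (-t * a) * (√(1 - 2 * t * v))⁻¹ ^ Fintype.card ι := by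
  rw [← mgf_sum_sq_pi_gaussianReal hv t]
  exact measure_ge_le_exp_mul_mgf a ht₀ (integrable_exp_mul_sum_sq_pi_gaussianReal hv ht)

lemma measureReal_pi_gaussianReal_sum_sq_le_le (hv : v ≠ 0) (ht₀ : t ≤ 0) (a : ℝ) :
    (Measure.pi fun _ => gaussianReal 0 v).real {x : ι → ℝ | ∑ i, x i ^ 2 ≤ a} ≤
      exp (-t * a) * (√(1 - 2 * t * v))⁻¹ ^ Fintype.card ι := by
  have ht : 2 * t * v < 1 := by nlinarith [v.coe_nonneg]
  rw [← mgf_sum_sq_pi_gaussianReal hv t]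
  exact measure_le_le_exp_mul_mgf a ht₀ (integrable_exp_mul_sum_sq_pi_gaussianReal hv ht)

end Chernoff

lemma exp_neg_mul_inv_sqrt_le_exp_neg {a b c : ℝ} (hc : 0 < c) (h : 1 ≤ c * (1 + 2 * (a - b))) :
    exp (-a) * (√c)⁻¹ ≤ exp (-b) := by
  have hc_inv : c⁻¹ ≤ exp (2 * (a - b)) :=
    ((inv_le_iff_one_le_mul₀' hc).2 h).trans (by linarith [add_one_le_exp (2 * (a - b))])
  calc exp (-a) * (√c)⁻¹ = exp (-a) * √c⁻¹ := by rw [sqrt_inv]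
    _ ≤ exp (-a) * √(exp (2 * (a - b))) := by gcongr
    _ = exp (-b) := by
      rw [two_mul, exp_add, sqrt_mul_self (exp_nonneg _), ← exp_add]
      ring_nf

lemma exp_neg_nat_mul_mul_pow_le {n : ℕ} {a b c : ℝ} (hc : 0 ≤ c)
    (h : exp (-a) * c ≤ exp (-b)) : exp (-(n * a)) * c ^ n ≤ exp (-(b * n)) := by
  calc exp (-(n * a)) * c ^ n = (exp (-a) * c) ^ n := by rw [mul_pow, ← exp_nat_mul]; ring_nf
    _ ≤ exp (-b) ^ n := by gcongr
    _ = exp (-(b * n)) := by rw [← exp_nat_mul]; ring_nf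

section Tails

variable {d : ℕ} {δ : ℝ}

lemma measureReal_pi_gaussianReal_one_add_sq_le_sum_sq_le (hd : d ≠ 0) (hδ₀ : 0 < δ)
    (hδ₁ : δ < 1) :
    (Measure.pi fun _ : Fin d => gaussianReal 0 (d : ℝ≥0)⁻¹).real
        {x | (1 + δ) ^ 2 ≤ ∑ i, x i ^ 2} ≤ exp (-(δ ^ 2 * d / 10)) := by
  have hv : ((d : ℝ≥0)⁻¹ : ℝ≥0) ≠ 0 := by simpa
  have h2tv : 2 * (d * (δ / 8)) * (((d : ℝ≥0)⁻¹ : ℝ≥0) : ℝ) = δ / 4 := by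
    have : (d : ℝ) ≠ 0 := by exact_mod_cast hd
    push_cast
    field_simp
    ring
  have hfactor : exp (-(δ / 8 * (1 + δ) ^ 2)) * (√(1 - δ / 4))⁻¹ ≤ exp (-(δ ^ 2 / 10)) :=
    exp_neg_mul_inv_sqrt_le_exp_neg (by linarith) (by nlinarith [sq_nonneg δ, sq_nonneg (δ * δ)])
  refine (measureReal_pi_gaussianReal_le_sum_sq_le (t := d * (δ / 8)) hv (by positivity)
    (by linarith) _).trans ?_
  rw [h2tv, Fintype.card_fin, neg_mul, mul_assoc, mul_div_right_comm]
  exact exp_neg_nat_mul_mul_pow_le (by positivity) hfactor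

lemma measureReal_pi_gaussianReal_sum_sq_le_one_sub_sq_le (hd : d ≠ 0) (hδ₀ : 0 < δ)
    (hδ₁ : δ < 1) :
    (Measure.pi fun _ : Fin d => gaussianReal 0 (d : ℝ≥0)⁻¹).real
        {x | ∑ i, x i ^ 2 ≤ (1 - δ) ^ 2} ≤ exp (-(δ ^ 2 * d / 10)) := by
  have hv : ((d : ℝ≥0)⁻¹ : ℝ≥0) ≠ 0 := by simpa
  have h2tv : 1 - 2 * (d * (-δ / 4)) * (((d : ℝ≥0)⁻¹ : ℝ≥0) : ℝ) = 1 + δ / 2 := by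
    have : (d : ℝ) ≠ 0 := by exact_mod_cast hd
    push_cast
    field_simp
    ring
  have hfactor : exp (-(-δ / 4 * (1 - δ) ^ 2)) * (√(1 + δ / 2))⁻¹ ≤ exp (-(δ ^ 2 / 10)) :=
    exp_neg_mul_inv_sqrt_le_exp_neg (by linarith)
      (by nlinarith [sq_nonneg δ, sq_nonneg (1 - δ), sq_nonneg (δ * (1 - δ))])
  refine (measureReal_pi_gaussianReal_sum_sq_le_le (t := d * (-δ / 4)) hv
    (mul_nonpos_of_nonneg_of_nonpos (by positivity) (by linarith)) _).trans ?_
  rw [h2tv, Fintype.card_fin, neg_mul, mul_assoc, mul_div_right_comm]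
  exact exp_neg_nat_mul_mul_pow_le (by positivity) hfactor

end Tails

lemma sq_le_or_le_sq_of_sqrt_notMem_Ioo {S a b : ℝ} (hb : 0 < b) (h : √S ∉ Set.Ioo a b) :
    S ≤ a ^ 2 ∨ b ^ 2 ≤ S := by
  rw [Set.mem_Ioo, not_and_or, not_lt, not_lt, sqrt_le_iff, le_sqrt' hb] at h
  exact h.imp_left And.right

/-- **Norm concentration.** If `x ∼ N(0, (1/d) I_d)` (i.e. the `d` coordinates of `x` are
independent Gaussians of mean `0` and variance `1/d`) and `δ ∈ (0,1)`, then
`P[‖x‖₂ ∈ (1-δ, 1+δ)] ≥ 1 - 2 exp(-δ² d / 10)`. -/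
theorem stmt2 (d : ℕ) (hd : 0 < d) (δ : ℝ) (hδ : δ ∈ Set.Ioo (0 : ℝ) 1) :
    1 - 2 * Real.exp (-(δ ^ 2 * d / 10)) ≤
      ((Measure.pi fun _ : Fin d => gaussianReal 0 ((d : ℝ≥0))⁻¹)
        {x : Fin d → ℝ | Real.sqrt (∑ i, (x i) ^ 2) ∈ Set.Ioo (1 - δ) (1 + δ)}).toReal := by
  obtain ⟨hδ₀, hδ₁⟩ := hδ
  have hlow := measureReal_pi_gaussianReal_sum_sq_le_one_sub_sq_le hd.ne' hδ₀ hδ₁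
  have hup := measureReal_pi_gaussianReal_one_add_sq_le_sum_sq_le hd.ne' hδ₀ hδ₁
  set μ := Measure.pi fun _ : Fin d => gaussianReal 0 ((d : ℝ≥0))⁻¹
  set E := {x : Fin d → ℝ | √(∑ i, x i ^ 2) ∈ Set.Ioo (1 - δ) (1 + δ)}
  have hE : MeasurableSet E := by measurability
  have hEc : Eᶜ ⊆ {x | ∑ i, x i ^ 2 ≤ (1 - δ) ^ 2} ∪ {x | (1 + δ) ^ 2 ≤ ∑ i, x i ^ 2} :=
    fun _ hx => sq_le_or_le_sq_of_sqrt_notMem_Ioo (by linarith) hx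
  calc 1 - 2 * exp (-(δ ^ 2 * d / 10)) ≤ 1 - μ.real Eᶜ := by
        linarith [(measureReal_mono (μ := μ) hEc).trans (measureReal_union_le _ _)]
    _ = μ.real E := by rw [probReal_compl_eq_one_sub hE, sub_sub_cancel]
end

section
/- Let C ≥ 1 be a real number, p ∈ (0, 1/2), ℓ and d positive integers, and let s be an integer with 1 ≤ s ≤ Cℓ. Let W be any s-dimensional linear subspace of ℝ^d, let π_W denote the orthogonal projection of ℝ^d onto W, and let x be a random vector in ℝ^d whose d coordinates are independent Gaussian random variables with mean 0 and variance 1/d. Set α = 100·C·log(10/p). Then P[‖π_W(x)‖₂ ≥ α√ℓ/√d] ≤ (p/10)^{10Cℓ}. -/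
/-!
Rescaled by `√d`, the vector `x` is a standard Gaussian on `ℝ^d`, and the orthogonal projection of a
standard Gaussian onto `W` is a standard Gaussian on `W`: their characteristic functions agree
because composing with the projection preserves the norm of a linear form on `W`. So
`d ‖π_W x‖²` is a χ² variable with `s` degrees of freedom, whose moment generating function at
`1/4` is `√2 ^ s`, and the Chernoff bound gives the tail `exp (-α² ℓ / 4) · √2 ^ s`, far below
`(p/10)^{10Cℓ}` since `s ≤ Cℓ`.
-/

open MeasureTheory ProbabilityTheory Real
open scoped NNReal

lemma Submodule.opNorm_comp_orthogonalProjectionOnto {E : Type*} [NormedAddCommGroup E]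
    [InnerProductSpace ℝ E] (K : Submodule ℝ E) [K.HasOrthogonalProjection]
    (L : StrongDual ℝ K) : ‖L.comp K.orthogonalProjectionOnto‖ = ‖L‖ := by
  refine le_antisymm ?_ ?_
  · calc ‖L.comp K.orthogonalProjectionOnto‖ ≤ ‖L‖ * ‖K.orthogonalProjectionOnto‖ :=
          L.opNorm_comp_le _
      _ ≤ ‖L‖ * 1 := by gcongr; exact K.orthogonalProjectionOnto_norm_le
      _ = ‖L‖ := mul_one _
  · refine L.opNorm_le_bound (norm_nonneg _) fun v => ?_
    have := (L.comp K.orthogonalProjectionOnto).le_opNorm v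
    rwa [ContinuousLinearMap.comp_apply, K.orthogonalProjectionOnto_mem_subspace_eq_self] at this

-- For `t ≥ 1/2` both sides are junk zeros: the integrand is not integrable and `√` vanishes.
lemma mgf_sq_gaussianReal (t : ℝ) :
    mgf (fun x => x ^ 2) (gaussianReal 0 1) t = (√(1 - 2 * t))⁻¹ := by
  have hpdf : ∀ x : ℝ, gaussianPDFReal 0 1 x • exp (t * x ^ 2)
      = (√(2 * π))⁻¹ * exp (-(1 / 2 - t) * x ^ 2) := by
    intro x
    simp only [gaussianPDFReal, NNReal.coe_one, sub_zero, mul_one, smul_eq_mul]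
    rw [mul_assoc, ← exp_add]
    ring_nf
  rw [mgf, integral_gaussianReal_eq_integral_smul one_ne_zero]
  simp_rw [hpdf]
  rw [integral_const_mul, integral_gaussian, ← sqrt_inv, ← sqrt_inv, ← sqrt_mul (by positivity)]
  congr 1
  field_simp

lemma map_toLp_pi_gaussianReal (ι : Type*) [Fintype ι] (v : ℝ≥0) :
    (Measure.pi fun _ : ι => gaussianReal 0 v).map (WithLp.toLp 2) =
      (stdGaussian (EuclideanSpace ℝ ι)).map (fun x => (NNReal.sqrt v : ℝ) • x) := by
  have hscale : gaussianReal 0 v = (gaussianReal 0 1).map (fun x => (NNReal.sqrt v : ℝ) * x) := by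
    rw [gaussianReal_map_const_mul, mul_zero]
    congr 1
    ext
    simp
  have hcomm : (fun x : EuclideanSpace ℝ ι => (NNReal.sqrt v : ℝ) • x) ∘ WithLp.toLp 2 =
      WithLp.toLp 2 ∘ fun (y : ι → ℝ) i => (NNReal.sqrt v : ℝ) * y i := rfl
  simp_rw [hscale]
  rw [← Measure.pi_map_pi (fun _ => by fun_prop), Measure.map_map (by fun_prop) (by fun_prop),
    ← hcomm, ← Measure.map_map (by fun_prop) (by fun_prop), map_pi_eq_stdGaussian]

section StdGaussian

variable {E : Type*} [NormedAddCommGroup E] [InnerProductSpace ℝ E] [FiniteDimensional ℝ E]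
  [MeasurableSpace E] [BorelSpace E]

lemma stdGaussian_map_orthogonalProjectionOnto (K : Submodule ℝ E) :
    (stdGaussian E).map K.orthogonalProjectionOnto = stdGaussian K := by
  apply Measure.ext_of_charFunDual
  ext L
  rw [charFunDual_map, charFunDual_stdGaussian, charFunDual_stdGaussian,
    K.opNorm_comp_orthogonalProjectionOnto]

lemma mgf_normSq_stdGaussian (t : ℝ) :
    mgf (fun x => ‖x‖ ^ 2) (stdGaussian E) t = (√(1 - 2 * t))⁻¹ ^ Module.finrank ℝ E := by
  have hnorm : ∀ y : Fin (Module.finrank ℝ E) → ℝ,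
      exp (t * ‖∑ i, y i • stdOrthonormalBasis ℝ E i‖ ^ 2) = ∏ i, exp (t * y i ^ 2) := by
    intro y
    rw [← exp_sum, ← Finset.mul_sum, (stdOrthonormalBasis ℝ E).sum_repr_symm (WithLp.toLp 2 y),
      LinearIsometryEquiv.norm_map, EuclideanSpace.real_norm_sq_eq]
  rw [stdGaussian, mgf_map (Measurable.aemeasurable (by fun_prop))
    (Continuous.aestronglyMeasurable (by fun_prop))]
  simp only [mgf, Function.comp_apply, hnorm]
  rw [integral_fintype_prod_eq_prod (fun _ x => exp (t * x ^ 2)), Finset.prod_const,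
    Finset.card_univ, Fintype.card_fin, ← mgf_sq_gaussianReal t, mgf]

lemma stdGaussian_real_normSq_ge_le {t : ℝ} (ht₀ : 0 ≤ t) (ht : t < 1 / 2) (r : ℝ) :
    (stdGaussian E).real {x | r ≤ ‖x‖ ^ 2} ≤
      exp (-t * r) * (√(1 - 2 * t))⁻¹ ^ Module.finrank ℝ E := by
  rw [← mgf_normSq_stdGaussian]
  refine measure_ge_le_exp_mul_mgf r ht₀ (mgf_pos_iff.mp ?_)
  rw [mgf_normSq_stdGaussian]
  have : 0 < 1 - 2 * t := by linarith
  positivity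

end StdGaussian

lemma one_le_log_ten_div {p : ℝ} (hp : p ∈ Set.Ioo (0 : ℝ) (1 / 2)) : 1 ≤ log (10 / p) := by
  obtain ⟨hp₀, hp₁⟩ := hp
  rw [le_log_iff_exp_le (by positivity), le_div_iff₀ hp₀]
  nlinarith [exp_one_lt_d9]

lemma exp_neg_sq_mul_sqrt_two_pow_le {C p ℓ : ℝ} (hC : 1 ≤ C) (hp : p ∈ Set.Ioo (0 : ℝ) (1 / 2))
    (hℓ : 0 ≤ ℓ) {s : ℕ} (hsC : (s : ℝ) ≤ C * ℓ) :
    exp (-(1 / 4) * (100 * C * log (10 / p) * √ℓ) ^ 2) * √2 ^ s ≤ (p / 10) ^ (10 * C * ℓ) := by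
  have hL := one_le_log_ten_div hp
  have hsqrt2 : √2 ^ s ≤ exp s := by
    rw [← exp_one_pow]
    gcongr
    calc √2 ≤ 1 + 1 := by rw [sqrt_le_left (by norm_num)]; norm_num
      _ ≤ exp 1 := add_one_le_exp 1
  have hrpow : (p / 10) ^ (10 * C * ℓ) = exp (-(10 * C * ℓ * log (10 / p))) := by
    rw [rpow_def_of_pos (by linarith [hp.1]), ← inv_div 10 p, log_inv]
    ring_nf
  calc exp (-(1 / 4) * (100 * C * log (10 / p) * √ℓ) ^ 2) * √2 ^ s
      ≤ exp (-(1 / 4) * (100 * C * log (10 / p) * √ℓ) ^ 2) * exp s := by gcongr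
    _ ≤ (p / 10) ^ (10 * C * ℓ) := by
      rw [hrpow, ← exp_add, exp_le_exp, mul_pow, sq_sqrt hℓ]
      have hCL : 1 ≤ C * log (10 / p) := by nlinarith
      nlinarith [mul_le_mul_of_nonneg_right hCL hℓ]

theorem stmt3_general (C : ℝ) (hC : 1 ≤ C) (p : ℝ) (hp : p ∈ Set.Ioo (0 : ℝ) (1 / 2))
    (ℓ d : ℕ) (hd : 0 < d)
    (s : ℕ) (hsC : (s : ℝ) ≤ C * ℓ)
    (W : Submodule ℝ (EuclideanSpace ℝ (Fin d))) (hW : Module.finrank ℝ W = s) :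
    (((Measure.pi fun _ : Fin d => gaussianReal 0 ((d : ℝ≥0))⁻¹).map
        (MeasurableEquiv.toLp 2 (Fin d → ℝ)))
      {x : EuclideanSpace ℝ (Fin d) |
        100 * C * Real.log (10 / p) * Real.sqrt ℓ / Real.sqrt d ≤
          ‖W.orthogonalProjectionOnto x‖}).toReal
      ≤ (p / 10) ^ (10 * C * (ℓ : ℝ)) := by
  set r := 100 * C * Real.log (10 / p) * Real.sqrt ℓ
  have hr : 0 ≤ r := by have := one_le_log_ten_div hp; positivity
  have hevent : (fun x => (NNReal.sqrt ((d : ℝ≥0))⁻¹ : ℝ) • x) ⁻¹'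
        {x : EuclideanSpace ℝ (Fin d) | r / √d ≤ ‖W.orthogonalProjectionOnto x‖} ⊆
      W.orthogonalProjectionOnto ⁻¹' {z | r ^ 2 ≤ ‖z‖ ^ 2} := by
    intro x hx
    have hd' : 0 < √(d : ℝ) := by positivity
    have hc : (NNReal.sqrt ((d : ℝ≥0))⁻¹ : ℝ) = (√d)⁻¹ := by simp
    simp only [Set.mem_preimage, Set.mem_ofPred_eq, map_smul, norm_smul, hc] at hx ⊢
    rw [norm_inv, norm_of_nonneg hd'.le, inv_mul_eq_div, div_le_div_iff_of_pos_right hd'] at hx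
    exact pow_le_pow_left₀ hr hx 2
  rw [← measureReal_def, MeasurableEquiv.coe_toLp, map_toLp_pi_gaussianReal]
  calc _ ≤ (stdGaussian _).real (W.orthogonalProjectionOnto ⁻¹' {z | r ^ 2 ≤ ‖z‖ ^ 2}) := by
        rw [map_measureReal_apply (by fun_prop) (measurableSet_le (by fun_prop) (by fun_prop))]
        exact measureReal_mono hevent
    _ = (stdGaussian W).real {z | r ^ 2 ≤ ‖z‖ ^ 2} := by
        rw [← stdGaussian_map_orthogonalProjectionOnto,
          map_measureReal_apply (by fun_prop) (measurableSet_le (by fun_prop) (by fun_prop))]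
    _ ≤ exp (-(1 / 4) * r ^ 2) * (√(1 - 2 * (1 / 4)))⁻¹ ^ s := by
        rw [← hW]
        exact stdGaussian_real_normSq_ge_le (by norm_num) (by norm_num) _
    _ = exp (-(1 / 4) * r ^ 2) * √2 ^ s := by norm_num [sqrt_inv]
    _ ≤ (p / 10) ^ (10 * C * (ℓ : ℝ)) := exp_neg_sq_mul_sqrt_two_pow_le hC hp ℓ.cast_nonneg hsC

/-- **Projection tail bound.** Let `1 ≤ s ≤ Cℓ` and let `W` be an `s`-dimensional subspace of
`ℝ^d`. If `x ∼ N(0, (1/d) I_d)` and `α = 100 C log(10/p)`, then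
`P[‖π_W(x)‖₂ ≥ α √ℓ / √d] ≤ (p/10)^{10 C ℓ}`. -/
theorem stmt3 (C : ℝ) (hC : 1 ≤ C) (p : ℝ) (hp : p ∈ Set.Ioo (0 : ℝ) (1 / 2))
    (ℓ d : ℕ) (hℓ : 0 < ℓ) (hd : 0 < d)
    (s : ℕ) (hs : 1 ≤ s) (hsC : (s : ℝ) ≤ C * ℓ)
    (W : Submodule ℝ (EuclideanSpace ℝ (Fin d))) (hW : Module.finrank ℝ W = s) :
    (((Measure.pi fun _ : Fin d => gaussianReal 0 ((d : ℝ≥0))⁻¹).map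
        (MeasurableEquiv.toLp 2 (Fin d → ℝ)))
      {x : EuclideanSpace ℝ (Fin d) |
        100 * C * Real.log (10 / p) * Real.sqrt ℓ / Real.sqrt d ≤
          ‖W.orthogonalProjectionOnto x‖}).toReal
      ≤ (p / 10) ^ (10 * C * (ℓ : ℝ)) :=
  stmt3_general C hC p hp ℓ d hd s hsC W hW
end

section
/- Let W be a nonnegative real random variable with E[W²] < ∞ whose survival function satisfies P(W ≥ s)·P(W ≥ t) ≥ P(W ≥ s + t) for all s, t ≥ 0. Then E[W²] ≤ 2·(E[W])²; in particular Var(W) ≤ (E[W])². -/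
/-!
With `F t = μ {t ≤ W}`, the layer-cake formula gives `E[W] = ∫₀^∞ F` and
`E[W²] = 2 ∫₀^∞ t F(t) dt = 2 ∫₀^∞ ∫ₛ^∞ F(t) dt ds` (Tonelli). Translating the inner integral,
`∫ₛ^∞ F = ∫₀^∞ F(s + u) du ≤ F(s) ∫₀^∞ F` by submultiplicativity, so `E[W²] ≤ 2 E[W]²`.
-/

open MeasureTheory Set ENNReal

theorem setLIntegral_Ioi_eq_setLIntegral_Ioi_zero_comp_add (F : ℝ → ℝ≥0∞) (s : ℝ) :
    ∫⁻ t in Ioi s, F t = ∫⁻ u in Ioi 0, F (u + s) := by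
  rw [← (measurePreserving_add_right volume s).setLIntegral_comp_preimage_emb
    (measurableEmbedding_addRight s), preimage_add_const_Ioi, sub_self]

theorem setLIntegral_Ioi_mul_ofReal_eq_setLIntegral_tail {F : ℝ → ℝ≥0∞} (hF : Measurable F) :
    ∫⁻ t in Ioi 0, F t * ENNReal.ofReal t = ∫⁻ s in Ioi 0, ∫⁻ t in Ioi s, F t := by
  have inner_s : EqOn (fun t => F t * ENNReal.ofReal t)
      (fun t => ∫⁻ s in Ioi 0, (Iio t).indicator (fun _ => F t) s) (Ioi 0) := by
    intro t _
    simp only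
    rw [lintegral_indicator measurableSet_Iio, Measure.restrict_restrict measurableSet_Iio,
      Iio_inter_Ioi, setLIntegral_const, Real.volume_Ioo, sub_zero, mul_comm]
  have inner_t : EqOn (fun s => ∫⁻ t in Ioi s, F t)
      (fun s => ∫⁻ t in Ioi 0, (Ioi s).indicator F t) (Ioi 0) := by
    intro s hs
    simp only
    rw [lintegral_indicator measurableSet_Ioi, Measure.restrict_restrict measurableSet_Ioi,
      Ioi_inter_Ioi, max_eq_left (le_of_lt hs)]
  rw [setLIntegral_congr_fun measurableSet_Ioi inner_s,
    setLIntegral_congr_fun measurableSet_Ioi inner_t, lintegral_lintegral_swap]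
  · simp only [indicator_apply, mem_Iio, mem_Ioi]
  · exact ((hF.comp measurable_fst).indicator
      (measurableSet_lt measurable_snd measurable_fst)).aemeasurable

theorem setLIntegral_Ioi_le_mul_of_submultiplicative {F : ℝ → ℝ≥0∞} (hF : Measurable F)
    (hsub : ∀ s t, 0 ≤ s → 0 ≤ t → F (s + t) ≤ F s * F t) {s : ℝ} (hs : 0 ≤ s) :
    ∫⁻ t in Ioi s, F t ≤ F s * ∫⁻ t in Ioi 0, F t := by
  rw [setLIntegral_Ioi_eq_setLIntegral_Ioi_zero_comp_add, ← lintegral_const_mul _ hF]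
  refine setLIntegral_mono (hF.const_mul _) fun u hu => ?_
  rw [add_comm]
  exact hsub s u hs (le_of_lt hu)

theorem setLIntegral_Ioi_mul_ofReal_le_sq_of_submultiplicative {F : ℝ → ℝ≥0∞}
    (hF : Measurable F) (hsub : ∀ s t, 0 ≤ s → 0 ≤ t → F (s + t) ≤ F s * F t) :
    ∫⁻ t in Ioi 0, F t * ENNReal.ofReal t ≤ (∫⁻ t in Ioi 0, F t) ^ 2 :=
  calc ∫⁻ t in Ioi 0, F t * ENNReal.ofReal t
      = ∫⁻ s in Ioi 0, ∫⁻ t in Ioi s, F t := setLIntegral_Ioi_mul_ofReal_eq_setLIntegral_tail hF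
    _ ≤ ∫⁻ s in Ioi 0, F s * ∫⁻ t in Ioi 0, F t :=
      setLIntegral_mono' measurableSet_Ioi fun s hs =>
        setLIntegral_Ioi_le_mul_of_submultiplicative hF hsub (le_of_lt hs)
    _ = (∫⁻ t in Ioi 0, F t) ^ 2 := by rw [lintegral_mul_const _ hF, sq]

theorem lintegral_sq_le_two_mul_sq_of_survival_submultiplicative {α : Type*}
    [MeasurableSpace α] {μ : Measure α} {f : α → ℝ} (hf_nn : 0 ≤ᵐ[μ] f) (hf : AEMeasurable f μ)
    (hsurv : ∀ s t, 0 ≤ s → 0 ≤ t →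
      μ {a | s + t ≤ f a} ≤ μ {a | s ≤ f a} * μ {a | t ≤ f a}) :
    ∫⁻ a, ENNReal.ofReal (f a ^ 2) ∂μ ≤ 2 * (∫⁻ a, ENNReal.ofReal (f a) ∂μ) ^ 2 := by
  have survival_antitone : Antitone fun t => μ {a | t ≤ f a} :=
    fun s t hst => measure_mono fun a (ha : t ≤ f a) => hst.trans ha
  have layer_cake_sq := lintegral_rpow_eq_lintegral_meas_le_mul μ hf_nn hf two_pos
  simp only [Real.rpow_two, ENNReal.ofReal_ofNat, show (2 : ℝ) - 1 = 1 by norm_num,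
    Real.rpow_one] at layer_cake_sq
  rw [layer_cake_sq, lintegral_eq_lintegral_meas_le μ hf_nn hf]
  gcongr
  exact setLIntegral_Ioi_mul_ofReal_le_sq_of_submultiplicative survival_antitone.measurable hsurv

/-- **Variance bound from submultiplicative survival function.** Let `W ≥ 0` be a real random
variable with `E[W²] < ∞` whose survival function satisfies
`P(W ≥ s) P(W ≥ t) ≥ P(W ≥ s + t)` for all `s, t ≥ 0`. Then `E[W²] ≤ 2 (E[W])²`;
in particular `Var(W) ≤ (E[W])²`. -/
theorem stmt11 {Ω : Type*} [MeasurableSpace Ω] (μ : Measure Ω) [IsProbabilityMeasure μ]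
    (W : Ω → ℝ) (hW : Measurable W) (hpos : ∀ ω, 0 ≤ W ω)
    (hint : Integrable (fun ω => (W ω) ^ 2) μ)
    (hsurv : ∀ s t : ℝ, 0 ≤ s → 0 ≤ t →
      μ {ω | s + t ≤ W ω} ≤ μ {ω | s ≤ W ω} * μ {ω | t ≤ W ω}) :
    (∫ ω, (W ω) ^ 2 ∂μ) ≤ 2 * (∫ ω, W ω ∂μ) ^ 2 ∧
    (∫ ω, (W ω) ^ 2 ∂μ) - (∫ ω, W ω ∂μ) ^ 2 ≤ (∫ ω, W ω ∂μ) ^ 2 := by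
  have hW_int : Integrable W μ :=
    ((memLp_two_iff_integrable_sq hW.aestronglyMeasurable).2 hint).integrable one_le_two
  have second_moment : ∫ ω, W ω ^ 2 ∂μ ≤ 2 * (∫ ω, W ω ∂μ) ^ 2 := by
    rw [← ENNReal.ofReal_le_ofReal_iff (by positivity), ENNReal.ofReal_mul zero_le_two,
      ENNReal.ofReal_pow (integral_nonneg hpos),
      ofReal_integral_eq_lintegral_ofReal hint (.of_forall fun ω => sq_nonneg (W ω)),
      ofReal_integral_eq_lintegral_ofReal hW_int (.of_forall hpos), ENNReal.ofReal_ofNat]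
    exact lintegral_sq_le_two_mul_sq_of_survival_submultiplicative (.of_forall hpos)
      hW.aemeasurable hsurv
  exact ⟨second_moment, by linarith⟩
end

section
/- Let Z be a standard normal random variable and b ∈ ℝ. Then Var(Z | Z ≤ b) ≤ (b + m(b))², where m(b) = φ(b)/Φ(b); equivalently, the variance of Z conditioned on {Z ≤ b} is at most the square of the conditional mean of b − Z. -/
/-- The standard normal density `φ(t) = exp(-t²/2)/√(2π)`. -/
noncomputable def stdPhi (t : ℝ) : ℝ := Real.exp (-t ^ 2 / 2) / Real.sqrt (2 * Real.pi)

/-- The standard normal CDF `Φ(t) = ∫_{-∞}^t φ(s) ds`. -/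
noncomputable def stdCDF (t : ℝ) : ℝ := ∫ s in Set.Iic t, stdPhi s

/-- The inverse Mills ratio `m(b) = φ(b)/Φ(b)`. -/
noncomputable def millsM (b : ℝ) : ℝ := stdPhi b / stdCDF b

/-- The variance of a standard normal truncated from above at `b`:
`V(b) = E[Z² | Z ≤ b] - (E[Z | Z ≤ b])²`, with
`E[f(Z) | Z ≤ b] = (1/Φ(b)) ∫_{-∞}^b f(z) φ(z) dz`. -/
noncomputable def truncVar (b : ℝ) : ℝ :=
  (stdCDF b)⁻¹ * (∫ z in Set.Iic b, z ^ 2 * stdPhi z)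
    - ((stdCDF b)⁻¹ * (∫ z in Set.Iic b, z * stdPhi z)) ^ 2


open Real MeasureTheory Set Filter Topology

/-!
Integrating by parts with `φ' = -zφ` gives `E[Z | Z ≤ b] = -m` and `E[Z² | Z ≤ b] = 1 - b m`,
where `m = m(b)`, so the claim reads `2m² + 3bm + b² - 1 ≥ 0`, i.e. `m(b) ≥ L(b) := (√(b²+8) - 3b)/4`,
the larger root of this quadratic in `m`. The Mills ratio solves the Riccati equation
`m' = -m(b + m)`, and `L` is a subsolution: `L' + L(b + L) ≤ 0`. Hence `φ/L - Φ` has nonnegative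
derivative `-φ (L' + L(b + L))/L²` on `(-∞, 1)`, where `L > 0`; it tends to `0` at `-∞`, so
`L Φ ≤ φ`.
-/

theorem integral_Iic_of_hasDerivAt_of_integrable {E : Type*} [NormedAddCommGroup E]
    [NormedSpace ℝ E] [CompleteSpace E] {f f' : ℝ → E} (hderiv : ∀ x, HasDerivAt f (f' x) x)
    (hf : Integrable f) (hf' : Integrable f') (a : ℝ) : ∫ x in Iic a, f' x = f a := by
  have hlim := tendsto_zero_of_hasDerivAt_of_integrableOn_Iic (a := a) (fun x _ => hderiv x)
    hf'.integrableOn hf.integrableOn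
  simpa using integral_Iic_of_hasDerivAt_of_tendsto' (fun x _ => hderiv x) hf'.integrableOn hlim

section StandardNormal

theorem stdPhi_pos (t : ℝ) : 0 < stdPhi t := by
  unfold stdPhi
  positivity

theorem continuous_stdPhi : Continuous stdPhi := by
  unfold stdPhi
  fun_prop

theorem hasDerivAt_stdPhi (t : ℝ) : HasDerivAt stdPhi (-t * stdPhi t) t := by
  have h : HasDerivAt (fun t : ℝ => -t ^ 2 / 2) (-t) t := by
    simpa using ((hasDerivAt_pow 2 t).neg.div_const 2).congr_deriv (by ring)
  unfold stdPhi
  exact (h.exp.div_const _).congr_deriv (by ring)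

theorem integrable_pow_mul_stdPhi (n : ℕ) : Integrable fun z : ℝ => z ^ n * stdPhi z := by
  have h := (integrable_rpow_mul_exp_neg_mul_sq (b := 1 / 2) (by norm_num)
    (s := n) (by linarith [n.cast_nonneg (α := ℝ)])).div_const (√(2 * π))
  refine h.congr (Eventually.of_forall fun z => ?_)
  simp only [rpow_natCast, stdPhi, mul_div_assoc]
  congr 3
  ring

theorem integrable_stdPhi : Integrable stdPhi := by
  simpa using integrable_pow_mul_stdPhi 0

theorem integral_mul_stdPhi_Iic (b : ℝ) : ∫ z in Iic b, z * stdPhi z = -stdPhi b := by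
  refine integral_Iic_of_hasDerivAt_of_integrable (f := fun z => -stdPhi z)
    (fun x => (hasDerivAt_stdPhi x).neg.congr_deriv (by ring)) integrable_stdPhi.neg ?_ b
  simpa using integrable_pow_mul_stdPhi 1

theorem integral_sq_mul_stdPhi_Iic (b : ℝ) :
    ∫ z in Iic b, z ^ 2 * stdPhi z = stdCDF b - b * stdPhi b := by
  have hderiv (x : ℝ) : HasDerivAt (fun z => -(z * stdPhi z)) (x ^ 2 * stdPhi x - stdPhi x) x :=
    ((hasDerivAt_id x).mul (hasDerivAt_stdPhi x)).neg.congr_deriv (by simp only [id]; ring)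
  have h := integral_Iic_of_hasDerivAt_of_integrable hderiv
    (by simpa using (integrable_pow_mul_stdPhi 1).neg)
    ((integrable_pow_mul_stdPhi 2).sub integrable_stdPhi) b
  rw [integral_sub (integrable_pow_mul_stdPhi 2).integrableOn integrable_stdPhi.integrableOn] at h
  rw [stdCDF]
  linarith

theorem stdCDF_sub_stdCDF (a b : ℝ) : stdCDF b - stdCDF a = ∫ z in a..b, stdPhi z :=
  intervalIntegral.integral_Iic_sub_Iic integrable_stdPhi.integrableOn
    integrable_stdPhi.integrableOn

theorem stdCDF_pos (b : ℝ) : 0 < stdCDF b := by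
  have h := intervalIntegral.intervalIntegral_pos_of_pos integrable_stdPhi.intervalIntegrable
    stdPhi_pos (sub_one_lt b)
  have h0 : 0 ≤ stdCDF (b - 1) :=
    setIntegral_nonneg measurableSet_Iic fun z _ => (stdPhi_pos z).le
  linarith [stdCDF_sub_stdCDF (b - 1) b]

theorem hasDerivAt_stdCDF (b : ℝ) : HasDerivAt stdCDF (stdPhi b) b := by
  have h : stdCDF = fun x => stdCDF 0 + ∫ z in (0 : ℝ)..x, stdPhi z := by
    ext x
    rw [← stdCDF_sub_stdCDF]
    ring
  rw [h]
  exact ((continuous_stdPhi.integral_hasStrictDerivAt 0 b).hasDerivAt).const_add _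

theorem tendsto_stdCDF_atBot : Tendsto stdCDF atBot (𝓝 0) := by
  have h := (intervalIntegral_tendsto_integral_Iic 0 integrable_stdPhi.integrableOn
    tendsto_id).const_sub (stdCDF 0)
  rw [← stdCDF, sub_self] at h
  refine h.congr fun a => ?_
  rw [id, ← stdCDF_sub_stdCDF]
  ring

theorem tendsto_stdPhi_atBot : Tendsto stdPhi atBot (𝓝 0) :=
  tendsto_zero_of_hasDerivAt_of_integrableOn_Iic (a := 0) (fun x _ => hasDerivAt_stdPhi x)
    (by simpa using (integrable_pow_mul_stdPhi 1).neg.integrableOn) integrable_stdPhi.integrableOn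

theorem truncVar_eq (b : ℝ) : truncVar b = 1 - b * millsM b - millsM b ^ 2 := by
  have h := (stdCDF_pos b).ne'
  rw [truncVar, millsM, integral_mul_stdPhi_Iic, integral_sq_mul_stdPhi_Iic]
  field_simp

end StandardNormal

section MillsRatio

theorem mul_stdCDF_le_stdPhi_of_riccati {L L' : ℝ → ℝ} {c : ℝ}
    (hderiv : ∀ x < c, HasDerivAt L (L' x) x) (hpos : ∀ x < c, 0 < L x)
    (hriccati : ∀ x < c, L' x + L x * (x + L x) ≤ 0)
    (hlim : Tendsto (fun x => stdPhi x / L x) atBot (𝓝 0)) {b : ℝ} (hb : b < c) :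
    L b * stdCDF b ≤ stdPhi b := by
  set V := fun x => stdPhi x / L x - stdCDF x
  have hV (x : ℝ) (hx : x < c) :
      HasDerivAt V (-stdPhi x * (L' x + L x * (x + L x)) / L x ^ 2) x := by
    have hL := (hpos x hx).ne'
    refine (((hasDerivAt_stdPhi x).div (hderiv x hx) hL).sub (hasDerivAt_stdCDF x)).congr_deriv ?_
    field_simp
    ring
  have hmono : MonotoneOn V (Iio c) := by
    refine monotoneOn_of_hasDerivWithinAt_nonneg (convex_Iio c)
      (fun x hx => (hV x hx).continuousAt.continuousWithinAt)
      (fun x hx => (hV x (interior_Iio.subset hx)).hasDerivWithinAt) fun x hx => ?_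
    rw [interior_Iio] at hx
    have := mul_nonneg (stdPhi_pos x).le (neg_nonneg.2 (hriccati x hx))
    rw [neg_mul_comm]
    positivity
  have hVb : 0 ≤ V b := by
    refine le_of_tendsto (by simpa using hlim.sub tendsto_stdCDF_atBot) ?_
    filter_upwards [Iic_mem_atBot b] with y hy
    exact hmono (hy.trans_lt hb) hb hy
  rw [← le_div_iff₀' (hpos b hb)]
  simpa [V] using hVb

noncomputable def millsLower (b : ℝ) : ℝ := (√(b ^ 2 + 8) - 3 * b) / 4

theorem millsLower_pos {b : ℝ} (hb : b < 1) : 0 < millsLower b := by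
  have hs := sq_sqrt (by positivity : (0 : ℝ) ≤ b ^ 2 + 8)
  have := sqrt_nonneg (b ^ 2 + 8)
  unfold millsLower
  nlinarith

theorem half_le_millsLower {b : ℝ} (hb : b ≤ 0) : 1 / 2 ≤ millsLower b := by
  have : 2 ≤ √(b ^ 2 + 8) := le_sqrt_of_sq_le (by nlinarith)
  unfold millsLower
  linarith

theorem hasDerivAt_millsLower (b : ℝ) :
    HasDerivAt millsLower ((b / √(b ^ 2 + 8) - 3) / 4) b := by
  have hs : b ^ 2 + 8 ≠ 0 := by positivity
  have h := ((((hasDerivAt_pow 2 b).add_const 8).sqrt hs).sub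
    ((hasDerivAt_id b).const_mul 3)).div_const 4
  exact h.congr_deriv (by push_cast; ring)

theorem millsLower_riccati (b : ℝ) :
    (b / √(b ^ 2 + 8) - 3) / 4 + millsLower b * (b + millsLower b) ≤ 0 := by
  unfold millsLower
  set s := √(b ^ 2 + 8)
  have hs : 0 < s := sqrt_pos.2 (by positivity)
  have hs2 : s ^ 2 = b ^ 2 + 8 := sq_sqrt (by positivity)
  have hN : 0 ≤ b ^ 3 + 6 * b + (b ^ 2 + 2) * s := by
    have h32 : ((b ^ 2 + 2) * s) ^ 2 - (b ^ 3 + 6 * b) ^ 2 = 32 := by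
      rw [mul_pow, hs2]; ring
    nlinarith [mul_pos (by positivity : (0 : ℝ) < b ^ 2 + 2) hs]
  have key : (b / s - 3) / 4 + (s - 3 * b) / 4 * (b + (s - 3 * b) / 4)
      = -(b ^ 3 + 6 * b + (b ^ 2 + 2) * s) / (8 * s) := by
    field_simp
    linear_combination (8 * s - 16 * b) * hs2
  rw [key]
  exact div_nonpos_of_nonpos_of_nonneg (by linarith) (by positivity)

theorem millsLower_mul_stdCDF_le (b : ℝ) : millsLower b * stdCDF b ≤ stdPhi b := by
  rcases lt_or_ge b 1 with hb | hb
  · refine mul_stdCDF_le_stdPhi_of_riccati (fun x _ => hasDerivAt_millsLower x)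
      (fun x hx => millsLower_pos hx) (fun x _ => millsLower_riccati x) ?_ hb
    have hL : ∀ᶠ x in atBot, 1 / 2 ≤ millsLower x :=
      eventually_atBot.2 ⟨0, fun x hx => half_le_millsLower hx⟩
    refine squeeze_zero' (hL.mono fun x hx => div_nonneg (stdPhi_pos x).le (by linarith))
      (hL.mono fun x hx => ?_) (by simpa using tendsto_stdPhi_atBot.const_mul 2)
    rw [div_le_iff₀ (by linarith)]
    nlinarith [stdPhi_pos x]
  · have hL : millsLower b ≤ 0 := by
      have hs := sq_sqrt (by positivity : (0 : ℝ) ≤ b ^ 2 + 8)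
      have := sqrt_nonneg (b ^ 2 + 8)
      unfold millsLower
      nlinarith
    nlinarith [stdCDF_pos b, stdPhi_pos b]

theorem millsLower_le_millsM (b : ℝ) : millsLower b ≤ millsM b :=
  (le_div_iff₀ (stdCDF_pos b)).2 (millsLower_mul_stdCDF_le b)

end MillsRatio

/-- **Truncated variance bound.** For a standard normal `Z` and any `b ∈ ℝ`,
`Var(Z | Z ≤ b) ≤ (b + m(b))²` where `m(b) = φ(b)/Φ(b)` is the inverse Mills ratio
(note `b + m(b) = E[b - Z | Z ≤ b]`). -/
theorem stmt12 (b : ℝ) : truncVar b ≤ (b + millsM b) ^ 2 := by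
  have hm := millsLower_le_millsM b
  have hs := sq_sqrt (by positivity : (0 : ℝ) ≤ b ^ 2 + 8)
  have hs0 := sqrt_nonneg (b ^ 2 + 8)
  -- `2m² + 3bm + b² - 1 = 2 (m - L)(m - L₂)` with the smaller root `L₂ = (-√(b²+8) - 3b)/4 ≤ L`
  rw [millsLower] at hm
  rw [truncVar_eq]
  nlinarith [mul_nonneg (sub_nonneg.2 hm) (by linarith : 0 ≤ millsM b + (√(b ^ 2 + 8) + 3 * b) / 4)]
end
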